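/- arXiv:2311.03844 — 3 statements merged into one kernel-verified Lean document; each statement's English description precedes it below -/
import Mathlib

section
/- Let A ∈ ℝ_max^{n×n}, let λ_1 > λ_2 > ⋯ > λ_p be the finite roots of χ_A(t), and let 𝔊_0, 𝔊_1, …, 𝔊_p be a maximal multi-circuit sequence of A. Then for each k = 1, 2, …, p, the mean weight of every circuit belonging to 𝔊_k is at least λ_k. -/
open BigOperators

/-- The max-plus semiring `ℝ_max = ℝ ∪ {ε}`, `ε = -∞`, realized as `WithBot ℝ`.
Here `⊔` (i.e. `max`) is the max-plus addition `⊕` and `+` is the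
max-plus multiplication `⊗` (with `⊥ + x = ⊥`). -/
abbrev Rmax : Type := WithBot ℝ

namespace MaxPlus

noncomputable section

/-- Max-plus matrix product `A ⊗ B`. -/
def mul {l m k : ℕ} (A : Matrix (Fin l) (Fin m) Rmax) (B : Matrix (Fin m) (Fin k) Rmax) :
    Matrix (Fin l) (Fin k) Rmax :=
  fun i j => Finset.univ.sup fun s => A i s + B s j

/-- Max-plus identity matrix `I_n` (`0` on the diagonal, `ε` off the diagonal). -/
def one (n : ℕ) : Matrix (Fin n) (Fin n) Rmax :=
  fun i j => if i = j then (0 : Rmax) else ⊥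

/-- Max-plus matrix power `A^{⊗t}`. -/
def pow {n : ℕ} (A : Matrix (Fin n) (Fin n) Rmax) : ℕ → Matrix (Fin n) (Fin n) Rmax
  | 0 => one n
  | t + 1 => mul (pow A t) A

variable {n : ℕ}

/-- `p` is a walk (path) of length `t` in the digraph `𝒢(A)`:
consecutive nodes are joined by arcs (finite entries of `A`). -/
def IsWalk (A : Matrix (Fin n) (Fin n) Rmax) (t : ℕ) (p : ℕ → Fin n) : Prop :=
  ∀ k, k < t → A (p k) (p (k + 1)) ≠ ⊥

/-- The weight of a walk: the sum of its arc weights. -/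
def weight (A : Matrix (Fin n) (Fin n) Rmax) (t : ℕ) (p : ℕ → Fin n) : Rmax :=
  ∑ k ∈ Finset.range t, A (p k) (p (k + 1))

/-- `p` is a circuit of length `t` in `𝒢(A)`. -/
def IsCircuit (A : Matrix (Fin n) (Fin n) Rmax) (t : ℕ) (p : ℕ → Fin n) : Prop :=
  0 < t ∧ IsWalk A t p ∧ p t = p 0

/-- Elementary circuit: no repeated node among `p 0, …, p (t-1)`. -/
def IsElemCircuit (A : Matrix (Fin n) (Fin n) Rmax) (t : ℕ) (p : ℕ → Fin n) : Prop :=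
  IsCircuit A t p ∧ ∀ k, k < t → ∀ l, l < t → p k = p l → k = l

/-- Mean weight `w(𝒞)/ℓ(𝒞)` of a circuit, as a real number
(the weight of a genuine circuit is never `⊥`). -/
def mean (A : Matrix (Fin n) (Fin n) Rmax) (t : ℕ) (p : ℕ → Fin n) : ℝ :=
  WithBot.unbotD 0 (weight A t p) / (t : ℝ)

/-- `x` is an eigenvector of `A` for the eigenvalue `lam`:
`x` is not identically `ε` and `A ⊗ x = lam ⊗ x`. -/
def IsEigenpair (A : Matrix (Fin n) (Fin n) Rmax) (lam : Rmax) (x : Fin n → Rmax) : Prop :=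
  (∃ i, x i ≠ ⊥) ∧ ∀ i, (Finset.univ.sup fun k => A i k + x k) = lam + x i

/-- `lam` is an eigenvalue of `A`. -/
def IsEigenvalue (A : Matrix (Fin n) (Fin n) Rmax) (lam : Rmax) : Prop :=
  ∃ x, IsEigenpair A lam x

/-- `μ = λ(A)`: the maximum mean weight over all circuits of `𝒢(A)`. -/
def IsMaxCircuitMean (A : Matrix (Fin n) (Fin n) Rmax) (μ : ℝ) : Prop :=
  (∃ t p, IsCircuit A t p ∧ mean A t p = μ) ∧ ∀ t p, IsCircuit A t p → mean A t p ≤ μ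

/-- Kleene star `A* = I_n ⊕ A ⊕ A^{⊗2} ⊕ ⋯ ⊕ A^{⊗(n-1)}`. -/
def star (A : Matrix (Fin n) (Fin n) Rmax) : Matrix (Fin n) (Fin n) Rmax :=
  fun i j => (Finset.range n).sup fun k => pow A k i j

/-- Partial sum `I_n ⊕ A ⊕ ⋯ ⊕ A^{⊗m}` of the Kleene star. -/
def starUpTo (A : Matrix (Fin n) (Fin n) Rmax) (m : ℕ) : Matrix (Fin n) (Fin n) Rmax :=
  fun i j => (Finset.range (m + 1)).sup fun k => pow A k i j

/-- Max-plus determinant `det A = ⊕_{π ∈ S_n} ⊗_i a_{iπ(i)}`. -/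
def det (A : Matrix (Fin n) (Fin n) Rmax) : Rmax :=
  Finset.univ.sup fun π : Equiv.Perm (Fin n) => ∑ i, A i (π i)

/-- Max-plus characteristic polynomial `χ_A(t) = det (A ⊕ t ⊗ I_n)`. -/
def charPoly (A : Matrix (Fin n) (Fin n) Rmax) (t : Rmax) : Rmax :=
  det fun i j => A i j ⊔ (if i = j then t else ⊥)

/-- Max-plus diagonal matrix `diag(d)` defined by a finite vector `d`. -/
def diagM (d : Fin n → ℝ) : Matrix (Fin n) (Fin n) Rmax :=
  fun i j => if i = j then ((d i : ℝ) : Rmax) else ⊥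

/-- `A` is irreducible: `𝒢(A)` is strongly connected. -/
def Irreducible (A : Matrix (Fin n) (Fin n) Rmax) : Prop :=
  ∀ i j : Fin n, ∃ t p, 0 < t ∧ IsWalk A t p ∧ p 0 = i ∧ p t = j

/-- `v` is a critical node of `A` (with `lamA = λ(A)`): it lies on a circuit
of mean weight `λ(A)`. -/
def IsCriticalNode (A : Matrix (Fin n) (Fin n) Rmax) (lamA : ℝ) (v : Fin n) : Prop :=
  ∃ t p, IsCircuit A t p ∧ mean A t p = lamA ∧ ∃ m, m < t ∧ p m = v

/-- `(i,j)` is a critical arc of `A` (with `lamA = λ(A)`). -/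
def IsCriticalArc (A : Matrix (Fin n) (Fin n) Rmax) (lamA : ℝ) (i j : Fin n) : Prop :=
  ∃ t p, IsCircuit A t p ∧ mean A t p = lamA ∧ ∃ m, m < t ∧ p m = i ∧ p (m + 1) = j

/-- A multi-circuit: a collection of pairwise node-disjoint elementary circuits,
each given by its length and its node sequence. -/
def IsMultiCircuit (A : Matrix (Fin n) (Fin n) Rmax) (L : List (ℕ × (ℕ → Fin n))) : Prop :=
  (∀ c ∈ L, IsElemCircuit A c.1 c.2) ∧
  L.Pairwise fun c d => ∀ k, k < c.1 → ∀ l, l < d.1 → c.2 k ≠ d.2 l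

/-- Length of a multi-circuit: the sum of the lengths of its circuits. -/
def mcLength {n : ℕ} (L : List (ℕ × (ℕ → Fin n))) : ℕ := (L.map Prod.fst).sum

/-- Weight of a multi-circuit: the sum of the weights of its circuits. -/
def mcWeight (A : Matrix (Fin n) (Fin n) Rmax) (L : List (ℕ × (ℕ → Fin n))) : Rmax :=
  (L.map fun c => weight A c.1 c.2).sum

/-- The value `w(𝔊) + λ·(n − ℓ(𝔊))` of a multi-circuit `𝔊`. -/
def mcVal (A : Matrix (Fin n) (Fin n) Rmax) (lam : ℝ)
    (L : List (ℕ × (ℕ → Fin n))) : Rmax :=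
  mcWeight A L + ((((n : ℝ) - (mcLength L : ℝ)) * lam : ℝ) : Rmax)

/-- `L` is a `λ`-maximal multi-circuit (λ-MMC): `χ_A(λ) = w(L) + λ·(n − ℓ(L))`. -/
def IsMMC (A : Matrix (Fin n) (Fin n) Rmax) (lam : ℝ) (L : List (ℕ × (ℕ → Fin n))) : Prop :=
  IsMultiCircuit A L ∧ charPoly A ((lam : ℝ) : Rmax) = mcVal A lam L

/-- `v` is the maximum weight of multi-circuits of length `k` in `𝒢(A)`
(`v = ⊥ = ε` if there is no multi-circuit of length `k`). -/
def IsMaxMCWeight (A : Matrix (Fin n) (Fin n) Rmax) (k : ℕ) (v : Rmax) : Prop :=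
  (∀ L, IsMultiCircuit A L → mcLength L = k → mcWeight A L ≤ v) ∧
  (v = ⊥ ∨ ∃ L, IsMultiCircuit A L ∧ mcLength L = k ∧ mcWeight A L = v)

/-- `rs` is a list of the `n` roots of `χ_A`, via the factorization of `χ_A`
into linear factors (the leading coefficient of `χ_A` is `0 = e`). -/
def IsCharRoots (A : Matrix (Fin n) (Fin n) Rmax) (rs : Fin n → Rmax) : Prop :=
  ∀ t, charPoly A t = ∑ i, (t ⊔ rs i)

/-- `lam 1 > lam 2 > ⋯ > lam p` are exactly the finite roots among `rs`,
in descending order. -/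
def IsFiniteRootSeq {n : ℕ} (rs : Fin n → Rmax) (p : ℕ) (lam : ℕ → ℝ) : Prop :=
  (∀ k, 1 ≤ k → k < p → lam (k + 1) < lam k) ∧
  (∀ k, 1 ≤ k → k ≤ p → ∃ i, rs i = ((lam k : ℝ) : Rmax)) ∧
  (∀ i, rs i = ⊥ ∨ ∃ k, 1 ≤ k ∧ k ≤ p ∧ rs i = ((lam k : ℝ) : Rmax))

/-- `G 0, G 1, …, G p` is a maximal multi-circuit sequence (MMCS) of `A`:
`G 0 = ∅` and `G k` is a `λ`-MMC for all `λ` with `λ_{k+1} ≤ λ ≤ λ_k`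
(where `λ_0 = +∞` and `λ_{p+1} = ε`). -/
def IsMMCS (A : Matrix (Fin n) (Fin n) Rmax) (p : ℕ) (lam : ℕ → ℝ)
    (G : ℕ → List (ℕ × (ℕ → Fin n))) : Prop :=
  G 0 = [] ∧
  ∀ k, k ≤ p → ∀ x : ℝ, (k < p → lam (k + 1) ≤ x) → (1 ≤ k → x ≤ lam k) → IsMMC A x (G k)

/-- The set of nodes of a circuit. -/
def circNodes (t : ℕ) (p : ℕ → Fin n) : Finset (Fin n) := (Finset.range t).image p

/-- A group produced by Algorithm 1: its node set `nodes`, its quasi-critical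
circuit `(ct, cp)`, and the index `k = k(s)` with `(ct, cp) ∈ 𝔊_{k(s)}`. -/
structure Grp (n : ℕ) where
  nodes : Finset (Fin n)
  ct : ℕ
  cp : ℕ → Fin n
  k : ℕ

/-- The union of the node sets of a list of groups. -/
def unionNodes (st : List (Grp n)) : Finset (Fin n) :=
  st.foldr (fun g acc => g.nodes ∪ acc) ∅

/-- One step of Algorithm 1, processing one circuit `c = (k, t, p)`;
the groups created so far are kept in reverse creation order. -/
def algStep (st : List (Grp n)) (c : ℕ × ℕ × (ℕ → Fin n)) : List (Grp n) :=
  let S := circNodes c.2.1 c.2.2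
  if (S ∩ unionNodes st).Nonempty then
    match st with
    | [] => []
    | g :: rest => { g with nodes := g.nodes ∪ (S \ unionNodes st) } :: rest
  else
    ⟨S, c.2.1, c.2.2, c.1⟩ :: st

/-- Algorithm 1: process the circuits of `G 1`, then `G 2`, …, then `G p` in
order, and finally add all never-covered nodes to the last created group.
The result is the list of groups `N_1, …, N_r` in creation order. -/
def algPartition (p : ℕ) (G : ℕ → List (ℕ × (ℕ → Fin n))) : List (Grp n) :=
  let items : List (ℕ × ℕ × (ℕ → Fin n)) :=
    (List.range p).foldr (fun k acc => ((G (k + 1)).map fun c => (k + 1, c.1, c.2)) ++ acc) []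
  let st := items.foldl algStep []
  match st with
  | [] => []
  | g :: rest =>
      (({ g with nodes := g.nodes ∪ (Finset.univ \ unionNodes (g :: rest)) } : Grp n)
        :: rest).reverse

/-- `U_s = N_1 ∪ ⋯ ∪ N_s` (`s` counted 1-based, i.e. the first `s` groups). -/
def Useq (Gs : List (Grp n)) (s : ℕ) : Finset (Fin n) := unionNodes (Gs.take s)

/-- The walk `P` (of length `t`) contains the circuit `(ct, cp)` as a
consecutive subpath. -/
def ContainsCircuit (t : ℕ) (P : ℕ → Fin n) (ct : ℕ) (cp : ℕ → Fin n) : Prop :=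
  ∃ m, m + ct ≤ t ∧ ∀ j, j ≤ ct → P (m + j) = cp j

end

end MaxPlus

section Aux

open MaxPlus

variable {n : ℕ}

private lemma coe_real_sum {ι : Type*} (s : Finset ι) (f : ι → ℝ) :
    ((∑ i ∈ s, f i : ℝ) : Rmax) = ∑ i ∈ s, ((f i : ℝ) : Rmax) := by
  push_cast; ring_nf

private lemma sum_ne_bot {ι : Type*} (s : Finset ι) (f : ι → Rmax)
    (h : ∀ i ∈ s, f i ≠ ⊥) : ∑ i ∈ s, f i ≠ ⊥ := by
  induction s using Finset.cons_induction with
  | empty => simp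
  | cons a s ha ih =>
      rw [Finset.sum_cons, Ne, WithBot.add_eq_bot]
      push_neg
      exact ⟨h a (Finset.mem_cons_self a s), ih fun i hi => h i (Finset.mem_cons_of_mem hi)⟩

/-- successor map along a circuit -/
private noncomputable def cyc (t : ℕ) (p : ℕ → Fin n) : Fin n → Fin n := fun v =>
  if h : ∃ m, m < t ∧ p m = v then p (Classical.choose h + 1) else v

variable {A : Matrix (Fin n) (Fin n) Rmax} {t : ℕ} {p : ℕ → Fin n}

private lemma circ_wrap (h : IsElemCircuit A t p) {m : ℕ} (hm : m < t) :
    p (m + 1) = p ((m + 1) % t) ∧ (m + 1) % t < t := by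
  rcases eq_or_lt_of_le (Nat.succ_le_of_lt hm) with he | hlt
  · subst he
    refine ⟨?_, by rw [Nat.mod_self]; omega⟩
    rw [Nat.mod_self]
    exact h.1.2.2
  · rw [Nat.mod_eq_of_lt hlt]; exact ⟨rfl, hlt⟩

private lemma mod_succ_inj (h : IsElemCircuit A t p) {m l : ℕ} (hm : m < t) (hl : l < t)
    (he : (m + 1) % t = (l + 1) % t) : m = l := by
  rcases Nat.lt_or_ge (m + 1) t with h1 | h1 <;> rcases Nat.lt_or_ge (l + 1) t with h2 | h2
  · rw [Nat.mod_eq_of_lt h1, Nat.mod_eq_of_lt h2] at he; omega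
  · have h3 : l + 1 = t := by omega
    rw [Nat.mod_eq_of_lt h1, h3, Nat.mod_self] at he; omega
  · have h3 : m + 1 = t := by omega
    rw [h3, Nat.mod_self, Nat.mod_eq_of_lt h2] at he; omega
  · omega

private lemma cyc_apply (h : IsElemCircuit A t p) {m : ℕ} (hm : m < t) :
    cyc t p (p m) = p (m + 1) := by
  have hex : ∃ l, l < t ∧ p l = p m := ⟨m, hm, rfl⟩
  have hc := Classical.choose_spec hex
  have : Classical.choose hex = m := h.2 _ hc.1 _ hm hc.2
  rw [cyc, dif_pos hex, this]

private lemma cyc_fix (hv : ∀ m, m < t → p m ≠ v) : cyc t p v = v := by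
  rw [cyc, dif_neg]
  rintro ⟨m, hm, he⟩
  exact hv m hm he

private lemma cyc_inj (h : IsElemCircuit A t p) : Function.Injective (cyc t p) := by
  intro u v huv
  by_cases hu : ∃ m, m < t ∧ p m = u <;> by_cases hv : ∃ m, m < t ∧ p m = v
  · obtain ⟨m, hm, rfl⟩ := hu
    obtain ⟨l, hl, rfl⟩ := hv
    rw [cyc_apply h hm, cyc_apply h hl, (circ_wrap h hm).1, (circ_wrap h hl).1] at huv
    have := h.2 _ (circ_wrap h hm).2 _ (circ_wrap h hl).2 huv
    rw [mod_succ_inj h hm hl this]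
  · obtain ⟨m, hm, rfl⟩ := hu
    rw [cyc_apply h hm, (circ_wrap h hm).1] at huv
    rw [cyc_fix (fun l hl he => hv ⟨l, hl, he⟩)] at huv
    exact absurd ⟨_, (circ_wrap h hm).2, huv⟩ hv
  · obtain ⟨l, hl, rfl⟩ := hv
    rw [cyc_apply h hl, (circ_wrap h hl).1] at huv
    rw [cyc_fix (fun m hm he => hu ⟨m, hm, he⟩)] at huv
    exact absurd ⟨_, (circ_wrap h hl).2, huv.symm⟩ hu
  · rwa [cyc_fix (fun l hl he => hu ⟨l, hl, he⟩),
      cyc_fix (fun l hl he => hv ⟨l, hl, he⟩)] at huv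

private lemma mem_circNodes {v : Fin n} :
    v ∈ circNodes t p ↔ ∃ m, m < t ∧ p m = v := by
  simp [circNodes, Finset.mem_image]

private lemma exists_perm_aux (A : Matrix (Fin n) (Fin n) Rmax) (x : ℝ) :
    ∀ L : List (ℕ × (ℕ → Fin n)), IsMultiCircuit A L →
    ∀ S : Finset (Fin n), (∀ c ∈ L, circNodes c.1 c.2 ⊆ S) →
    ∃ π : Equiv.Perm (Fin n),
      (∀ v : Fin n, (∀ c ∈ L, v ∉ circNodes c.1 c.2) → π v = v) ∧
      mcWeight A L + ((((S.card : ℝ) - (mcLength L : ℝ)) * x : ℝ) : Rmax)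
        ≤ ∑ v ∈ S, (A v (π v) ⊔ if v = π v then ((x : ℝ) : Rmax) else ⊥) := by
  intro L
  induction L with
  | nil =>
      intro _ S _
      refine ⟨Equiv.refl _, fun v _ => rfl, ?_⟩
      have h1 : mcWeight A ([] : List (ℕ × (ℕ → Fin n))) = 0 := by simp [mcWeight]
      have h2 : mcLength ([] : List (ℕ × (ℕ → Fin n))) = 0 := by simp [mcLength]
      rw [h1, h2, zero_add]
      have hr : ((S.card : ℝ) - ((0 : ℕ) : ℝ)) * x = ∑ _v ∈ S, x := by
        rw [Finset.sum_const, nsmul_eq_mul]; push_cast; ring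
      calc ((((S.card : ℝ) - ((0:ℕ) : ℝ)) * x : ℝ) : Rmax)
          = ((∑ _v ∈ S, x : ℝ) : Rmax) := by rw [hr]
        _ = ∑ v ∈ S, ((x : ℝ) : Rmax) := coe_real_sum S _
        _ ≤ ∑ v ∈ S, (A v v ⊔ ((x : ℝ) : Rmax)) := Finset.sum_le_sum fun v _ => le_sup_right
        _ = ∑ v ∈ S, (A v ((Equiv.refl _) v) ⊔ if v = (Equiv.refl _) v then ((x : ℝ) : Rmax) else ⊥) := by
            refine Finset.sum_congr rfl fun v _ => ?_
            simp
  | cons c L' ih =>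
      intro hmc S hS
      have helem : IsElemCircuit A c.1 c.2 := hmc.1 c (List.mem_cons_self)
      have hpc := (List.pairwise_cons.mp hmc.2)
      have hmc' : IsMultiCircuit A L' :=
        ⟨fun d hd => hmc.1 d (List.mem_cons_of_mem _ hd), hpc.2⟩
      set C := circNodes c.1 c.2 with hC
      have hdisj : ∀ d ∈ L', ∀ v, v ∈ circNodes d.1 d.2 → v ∉ C := by
        intro d hd v hvd hvc
        obtain ⟨l, hl, hel⟩ := mem_circNodes.mp hvd
        obtain ⟨m, hm, hem⟩ := mem_circNodes.mp hvc
        exact hpc.1 d hd m hm l hl (hem.trans hel.symm)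
      have hCS : C ⊆ S := hS c (List.mem_cons_self)
      set S' := S \ C with hS'
      have hS'sub : ∀ d ∈ L', circNodes d.1 d.2 ⊆ S' := by
        intro d hd v hv
        exact Finset.mem_sdiff.mpr ⟨hS d (List.mem_cons_of_mem _ hd) hv, hdisj d hd v hv⟩
      obtain ⟨π', hfix', hle'⟩ := ih hmc' S' hS'sub
      have hcycinj := cyc_inj helem
      set σ : Equiv.Perm (Fin n) :=
        Equiv.ofBijective (cyc c.1 c.2) (Finite.injective_iff_bijective.mp hcycinj) with hσ
      have hσapp : ∀ v, σ v = cyc c.1 c.2 v := fun v => Equiv.ofBijective_apply _ _ v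
      refine ⟨σ.trans π', ?_, ?_⟩
      · intro v hv
        have h1 : σ v = v := by
          rw [hσapp]
          exact cyc_fix fun m hm he => hv c (List.mem_cons_self) (mem_circNodes.mpr ⟨m, hm, he⟩)
        have h2 : π' v = v := hfix' v fun d hd => hv d (List.mem_cons_of_mem _ hd)
        simp [Equiv.trans_apply, h1, h2]
      · -- main inequality
        have hπC : ∀ v ∈ C, (σ.trans π') v = cyc c.1 c.2 v := by
          intro v hv
          obtain ⟨m, hm, rfl⟩ := mem_circNodes.mp hv
          have hmem : cyc c.1 c.2 (c.2 m) ∈ C := by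
            rw [cyc_apply helem hm, (circ_wrap helem hm).1]
            exact mem_circNodes.mpr ⟨_, (circ_wrap helem hm).2, rfl⟩
          have : π' (cyc c.1 c.2 (c.2 m)) = cyc c.1 c.2 (c.2 m) :=
            hfix' _ fun d hd hmem' => hdisj d hd _ hmem' hmem
          simp [Equiv.trans_apply, hσapp, this]
        have hπS' : ∀ v ∈ S', (σ.trans π') v = π' v := by
          intro v hv
          have hvC : v ∉ C := (Finset.mem_sdiff.mp hv).2
          have : σ v = v := by
            rw [hσapp]
            exact cyc_fix fun m hm he => hvC (mem_circNodes.mpr ⟨m, hm, he⟩)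
          simp [Equiv.trans_apply, this]
        have hcardC : C.card = c.1 := by
          rw [hC, circNodes, Finset.card_image_of_injOn, Finset.card_range]
          intro a ha b hb he
          exact helem.2 a (Finset.mem_range.mp ha) b (Finset.mem_range.mp hb) he
        have hcardS' : (S'.card : ℝ) = (S.card : ℝ) - (c.1 : ℝ) := by
          rw [hS', Finset.card_sdiff_of_subset hCS, hcardC,
            Nat.cast_sub (hcardC ▸ Finset.card_le_card hCS)]
        set B : Fin n → Fin n → Rmax :=
          fun i j => A i j ⊔ if i = j then ((x : ℝ) : Rmax) else ⊥ with hB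
        have hsplit : ∑ v ∈ S, B v ((σ.trans π') v)
            = ∑ v ∈ S', B v ((σ.trans π') v) + ∑ v ∈ C, B v ((σ.trans π') v) :=
          (Finset.sum_sdiff hCS).symm
        have hw : weight A c.1 c.2 ≤ ∑ v ∈ C, B v ((σ.trans π') v) := by
          rw [hC, circNodes, Finset.sum_image
            (fun a ha b hb he => helem.2 a (Finset.mem_range.mp ha) b (Finset.mem_range.mp hb) he)]
          refine Finset.sum_le_sum fun m hm => ?_
          have hm' := Finset.mem_range.mp hm
          have : (σ.trans π') (c.2 m) = c.2 (m + 1) := by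
            rw [hπC _ (mem_circNodes.mpr ⟨m, hm', rfl⟩), cyc_apply helem hm']
          rw [this]
          exact le_sup_left
        have hrest : mcWeight A L' + ((((S'.card : ℝ) - (mcLength L' : ℝ)) * x : ℝ) : Rmax)
            ≤ ∑ v ∈ S', B v ((σ.trans π') v) := by
          refine le_trans hle' (le_of_eq (Finset.sum_congr rfl fun v hv => ?_))
          rw [hπS' v hv]
        have hWcons : mcWeight A (c :: L') = weight A c.1 c.2 + mcWeight A L' := by
          simp [mcWeight]
        have hLcons : mcLength (c :: L') = c.1 + mcLength L' := by
          simp [mcLength]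
        calc mcWeight A (c :: L') + ((((S.card : ℝ) - (mcLength (c :: L') : ℝ)) * x : ℝ) : Rmax)
            = weight A c.1 c.2 + (mcWeight A L' + ((((S'.card : ℝ) - (mcLength L' : ℝ)) * x : ℝ) : Rmax)) := by
              have harith : ((S.card : ℝ) - (mcLength (c :: L') : ℝ)) * x
                  = ((S'.card : ℝ) - (mcLength L' : ℝ)) * x := by
                rw [hcardS', hLcons]; push_cast; ring
              rw [hWcons, harith, add_assoc]
          _ ≤ ∑ v ∈ C, B v ((σ.trans π') v) + ∑ v ∈ S', B v ((σ.trans π') v) :=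
              add_le_add hw hrest
          _ = ∑ v ∈ S, B v ((σ.trans π') v) := by rw [hsplit, add_comm]

private lemma mcVal_le_charPoly (A : Matrix (Fin n) (Fin n) Rmax) (x : ℝ)
    (L : List (ℕ × (ℕ → Fin n))) (hL : IsMultiCircuit A L) :
    mcVal A x L ≤ charPoly A ((x : ℝ) : Rmax) := by
  obtain ⟨π, -, hle⟩ := exists_perm_aux A x L hL Finset.univ (fun _ _ _ _ => Finset.mem_univ _)
  have h1 : mcVal A x L = mcWeight A L
      + ((((Finset.univ : Finset (Fin n)).card : ℝ) - (mcLength L : ℝ)) * x : ℝ) := by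
    rw [mcVal, Finset.card_univ, Fintype.card_fin]
  rw [h1]
  refine le_trans hle ?_
  have h2 : charPoly A ((x : ℝ) : Rmax)
      = Finset.univ.sup fun π : Equiv.Perm (Fin n) =>
          ∑ i, (A i (π i) ⊔ if i = π i then ((x : ℝ) : Rmax) else ⊥) := rfl
  rw [h2]
  exact Finset.le_sup (f := fun π : Equiv.Perm (Fin n) =>
    ∑ i, (A i (π i) ⊔ if i = π i then ((x : ℝ) : Rmax) else ⊥)) (Finset.mem_univ π)

end Aux

open MaxPlus in
private lemma main_glue {n : ℕ} (A : Matrix (Fin n) (Fin n) Rmax)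
    (rs : Fin n → Rmax) (hroots : IsCharRoots A rs)
    (p : ℕ) (lam : ℕ → ℝ) (hfr : IsFiniteRootSeq rs p lam)
    (G : ℕ → List (ℕ × (ℕ → Fin n))) (hG : IsMMCS A p lam G) :
    ∀ k, 1 ≤ k → k ≤ p → ∀ c ∈ G k, lam k ≤ mean A c.1 c.2 := by
  intro k hk1 hkp c hc
  set L := G k with hL
  have hMMC : IsMMC A (lam k) L :=
    hG.2 k hkp (lam k) (fun h => (hfr.1 k hk1 h).le) (fun _ => le_rfl)
  have hmc := hMMC.1
  have hval := hMMC.2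
  -- decompose L around c
  obtain ⟨l1, l2, hdecomp⟩ := List.append_of_mem hc
  set L' := l1 ++ l2 with hL'
  have hsub : L'.Sublist L := by
    rw [hdecomp, hL']
    exact List.Sublist.append (List.Sublist.refl l1) (List.sublist_cons_self c l2)
  have hmc' : IsMultiCircuit A L' :=
    ⟨fun d hd => hmc.1 d (hsub.mem hd), hmc.2.sublist hsub⟩
  have hperm : L.Perm (c :: L') := by rw [hdecomp, hL']; exact List.perm_middle
  have hW : mcWeight A L = weight A c.1 c.2 + mcWeight A L' := by
    rw [mcWeight, List.Perm.sum_eq (List.Perm.map _ hperm)]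
    simp [mcWeight]
  have hLen : mcLength L = c.1 + mcLength L' := by
    rw [mcLength, List.Perm.sum_eq (List.Perm.map _ hperm)]
    simp [mcLength]
  -- charPoly at lam k is not bot
  have hχne : charPoly A ((lam k : ℝ) : Rmax) ≠ ⊥ := by
    rw [hroots]
    refine sum_ne_bot _ _ fun i _ h => ?_
    rw [sup_eq_bot_iff] at h
    exact WithBot.coe_ne_bot h.1
  have hvalne : mcVal A (lam k) L ≠ ⊥ := hval ▸ hχne
  have hWne : mcWeight A L ≠ ⊥ := by
    intro h
    exact hvalne (by rw [mcVal, h, WithBot.add_eq_bot]; left; rfl)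
  rw [hW, Ne, WithBot.add_eq_bot] at hWne
  push_neg at hWne
  obtain ⟨wc, hwc⟩ := WithBot.ne_bot_iff_exists.mp hWne.1
  obtain ⟨w', hw'⟩ := WithBot.ne_bot_iff_exists.mp hWne.2
  have hle := mcVal_le_charPoly A (lam k) L' hmc'
  rw [hval] at hle
  -- turn into a real inequality
  have hcast : mcVal A (lam k) L
      = (((wc + (w' + ((n : ℝ) - (mcLength L : ℝ)) * lam k)) : ℝ) : Rmax) := by
    rw [mcVal, hW, ← hwc, ← hw', WithBot.coe_add, WithBot.coe_add, add_assoc]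
  have hcast' : mcVal A (lam k) L'
      = (((w' + ((n : ℝ) - (mcLength L' : ℝ)) * lam k) : ℝ) : Rmax) := by
    rw [mcVal, ← hw', WithBot.coe_add]
  rw [hcast, hcast', WithBot.coe_le_coe] at hle
  -- conclude
  have htpos : 0 < c.1 := (hmc.1 c hc).1.1
  have h2 : ((n : ℝ) - (mcLength L : ℝ)) = ((n : ℝ) - (mcLength L' : ℝ)) - (c.1 : ℝ) := by
    rw [hLen]; push_cast; ring
  rw [h2] at hle
  have hkey : (c.1 : ℝ) * lam k ≤ wc := by nlinarith [hle]
  have hmean : mean A c.1 c.2 = wc / (c.1 : ℝ) := by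
    rw [mean, ← hwc]
    simp
  rw [hmean, le_div_iff₀ (by exact_mod_cast htpos)]
  linarith [hkey]

open MaxPlus in
/-- **Lemma 1.** Let `λ_1 > ⋯ > λ_p` be the finite roots of `χ_A`
and `𝔊_0, …, 𝔊_p` an MMCS of `A`.  For each `k = 1, …, p`, the mean weight of every
circuit belonging to `𝔊_k` is at least `λ_k`. -/
theorem mmcs_circuit_mean_ge {n : ℕ} (A : Matrix (Fin n) (Fin n) Rmax)
    (rs : Fin n → Rmax) (hroots : IsCharRoots A rs)
    (p : ℕ) (lam : ℕ → ℝ) (hfr : IsFiniteRootSeq rs p lam)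
    (G : ℕ → List (ℕ × (ℕ → Fin n))) (hG : IsMMCS A p lam G) :
    ∀ k, 1 ≤ k → k ≤ p → ∀ c ∈ G k, lam k ≤ mean A c.1 c.2 := by
  exact main_glue A rs hroots p lam hfr G hG
end

section
/- Let A ∈ ℝ_max^{n×n} be a visualized matrix with λ(A) = 0, and let 𝒞* = (1, 2, …, ℓ, 1) be a critical circuit on the nodes {1,…,ℓ} (so all its arcs have weight 0). For nodes i, j let d_{ij} denote the maximum weight over all i-j paths in 𝒢(A) whose length is a nonnegative multiple of ℓ (the empty path of weight 0 is allowed when i = j; d_{ij} = ε if no such path exists; the maximum exists since λ(A) = 0). Then for every i-j path 𝒫 of length t in 𝒢(A) that contains 𝒞* as a consecutive subpath, there exist k, k′ ∈ {1, 2, …, ℓ} with k′ ≡ t + k (mod ℓ) such that w(𝒫) ≤ d_{ik} + d_{k′j}. -/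
open BigOperators

open MaxPlus in
/-- **Proposition 3.** Let `A` be visualized with `λ(A) = 0`, and let
`𝒞* = (cp 0, …, cp ℓ)` be a critical (elementary) circuit, all of whose arcs have
weight `0`.  Let `d i j` be the maximum weight over `i`-`j` paths whose length is a
nonnegative multiple of `ℓ` (`ε` if none).  Then every `i`-`j` path `P` of length `t`
containing `𝒞*` as a consecutive subpath satisfies `w(P) ≤ d i (cp k) + d (cp k') j`
for some nodes `cp k, cp k'` of `𝒞*` with `k' ≡ t + k (mod ℓ)`. -/
theorem path_weight_le_of_contains_critical_circuit {n : ℕ}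
    (A : Matrix (Fin n) (Fin n) Rmax)
    (hvis : ∀ i j, A i j ≤ (0 : Rmax)) (hlam : IsMaxCircuitMean A 0)
    (ℓ : ℕ) (cp : ℕ → Fin n) (hcirc : IsElemCircuit A ℓ cp)
    (hcrit : mean A ℓ cp = 0) (harcs : ∀ m, m < ℓ → A (cp m) (cp (m + 1)) = 0)
    (d : Fin n → Fin n → Rmax)
    (hd : ∀ i j : Fin n,
      (∀ T P, IsWalk A T P → P 0 = i → P T = j → ℓ ∣ T → weight A T P ≤ d i j) ∧
      (d i j = ⊥ ∨ ∃ T P, IsWalk A T P ∧ P 0 = i ∧ P T = j ∧ ℓ ∣ T ∧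
        weight A T P = d i j))
    (i j : Fin n) (t : ℕ) (P : ℕ → Fin n)
    (hP : IsWalk A t P) (hP0 : P 0 = i) (hPt : P t = j)
    (hPC : ContainsCircuit t P ℓ cp) :
    ∃ k k' : Fin ℓ, (k' : ℕ) % ℓ = (t + (k : ℕ)) % ℓ ∧
      weight A t P ≤ d i (cp k) + d (cp k') j := by
  classical
  obtain ⟨⟨hℓpos, hcw, hcyc⟩, hinj⟩ := hcirc
  obtain ⟨m, hmt, hsub⟩ := hPC
  have hmlt : m ≤ t := le_trans (Nat.le_add_right m ℓ) hmt
  set s : ℕ := (ℓ - m % ℓ) % ℓ with hs_def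
  set s' : ℕ := (t - m) % ℓ with hs'_def
  have hs : s < ℓ := Nat.mod_lt _ hℓpos
  have hs' : s' < ℓ := Nat.mod_lt _ hℓpos
  have hml : m % ℓ < ℓ := Nat.mod_lt _ hℓpos
  have hms : (m + s) % ℓ = 0 := by
    rcases Nat.eq_zero_or_pos (m % ℓ) with h0 | hpos
    · have hseq : s = 0 := by
        rw [hs_def, h0, Nat.sub_zero, Nat.mod_self]
      rw [hseq, Nat.add_zero, h0]
    · have hlt : ℓ - m % ℓ < ℓ := by omega
      have hseq : s = ℓ - m % ℓ := by rw [hs_def, Nat.mod_eq_of_lt hlt]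
      rw [hseq, Nat.add_mod, Nat.mod_eq_of_lt hlt]
      have h2 : m % ℓ + (ℓ - m % ℓ) = ℓ := by omega
      rw [h2, Nat.mod_self]
  have hT2mod : (ℓ - s' + (t - m)) % ℓ = 0 := by
    rcases Nat.eq_zero_or_pos s' with h0 | hpos
    · rw [h0, Nat.sub_zero, Nat.add_mod, Nat.mod_self, Nat.zero_add,
        Nat.mod_mod_of_dvd _ dvd_rfl, ← hs'_def, h0]
    · have hlt : ℓ - s' < ℓ := by omega
      rw [Nat.add_mod, Nat.mod_eq_of_lt hlt, ← hs'_def]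
      have h2 : ℓ - s' + s' = ℓ := by omega
      rw [h2, Nat.mod_self]
  have hcong : s' % ℓ = (t + s) % ℓ := by
    have h1 : t + s = (t - m) + (m + s) := by omega
    rw [Nat.mod_eq_of_lt hs', h1, Nat.add_mod, hms, Nat.add_zero,
      Nat.mod_mod_of_dvd _ dvd_rfl, ← hs'_def]
  -- the prefix walk extended along the circuit
  set Q1 : ℕ → Fin n := fun x => if x ≤ m then P x else cp (x - m) with hQ1_def
  have hP00 : P m = cp 0 := by simpa using hsub 0 (Nat.zero_le _)
  have hQ1cp : ∀ x, m ≤ x → Q1 x = cp (x - m) := by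
    intro x hx
    rcases eq_or_lt_of_le hx with h | h
    · rw [hQ1_def]; simp only [← h, le_refl, if_pos, Nat.sub_self]
      exact hP00
    · rw [hQ1_def]; simp only [if_neg (by omega : ¬ x ≤ m)]
  have hQ1walk : IsWalk A (m + s) Q1 := by
    intro x hx
    rcases lt_or_ge x m with h | h
    · have e1 : Q1 x = P x := by rw [hQ1_def]; simp only [if_pos (by omega : x ≤ m)]
      have e2 : Q1 (x + 1) = P (x + 1) := by
        rw [hQ1_def]; simp only [if_pos (by omega : x + 1 ≤ m)]
      rw [e1, e2]; exact hP x (by omega)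
    · have e1 : Q1 x = cp (x - m) := hQ1cp x h
      have e2 : Q1 (x + 1) = cp (x - m + 1) := by
        rw [hQ1cp (x + 1) (by omega)]
        congr 1; omega
      rw [e1, e2, harcs (x - m) (by omega)]
      exact (by norm_num : (0 : Rmax) ≠ ⊥)
  have hQ10 : Q1 0 = i := by
    rw [hQ1_def]; simp only [if_pos (Nat.zero_le m)]; exact hP0
  have hQ1end : Q1 (m + s) = cp s := by
    rw [hQ1cp (m + s) (Nat.le_add_right m s)]
    congr 1; omega
  have hdvd1 : ℓ ∣ (m + s) := Nat.dvd_of_mod_eq_zero hms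
  have hwQ1 : weight A (m + s) Q1 = ∑ x ∈ Finset.range m, A (P x) (P (x + 1)) := by
    unfold weight
    rw [Finset.sum_range_add]
    have h1 : ∀ x ∈ Finset.range m, A (Q1 x) (Q1 (x + 1)) = A (P x) (P (x + 1)) := by
      intro x hx
      rw [Finset.mem_range] at hx
      have e1 : Q1 x = P x := by rw [hQ1_def]; simp only [if_pos (by omega : x ≤ m)]
      have e2 : Q1 (x + 1) = P (x + 1) := by
        rw [hQ1_def]; simp only [if_pos (by omega : x + 1 ≤ m)]
      rw [e1, e2]
    have h2 : ∀ x ∈ Finset.range s, A (Q1 (m + x)) (Q1 (m + x + 1)) = 0 := by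
      intro x hx
      rw [Finset.mem_range] at hx
      have e1 : Q1 (m + x) = cp x := by
        rw [hQ1cp (m + x) (Nat.le_add_right m x)]; congr 1; omega
      have e2 : Q1 (m + x + 1) = cp (x + 1) := by
        rw [hQ1cp (m + x + 1) (by omega)]; congr 1; omega
      rw [e1, e2]; exact harcs x (by omega)
    rw [Finset.sum_congr rfl h1, Finset.sum_congr rfl h2]
    simp
  have hb1 : (∑ x ∈ Finset.range m, A (P x) (P (x + 1))) ≤ d i (cp s) := by
    rw [← hwQ1]
    exact (hd i (cp s)).1 (m + s) Q1 hQ1walk hQ10 hQ1end hdvd1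
  -- the suffix walk, with a circuit segment prepended
  set u : ℕ := ℓ - s' with hu_def
  have hu_pos : 0 < u := by omega
  set Q2 : ℕ → Fin n := fun x => if x < u then cp (s' + x) else P (m + (x - u)) with hQ2_def
  have hQ2cp : ∀ x, x ≤ u → Q2 x = cp (s' + x) := by
    intro x hx
    rcases lt_or_eq_of_le hx with h | h
    · rw [hQ2_def]; simp only [if_pos h]
    · rw [hQ2_def]; simp only [if_neg (by omega : ¬ x < u)]
      have e1 : x - u = 0 := by omega
      have e2 : s' + x = ℓ := by omega
      rw [e1, e2, Nat.add_zero, hP00, hcyc]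
  have hQ2P : ∀ x, Q2 (u + x) = P (m + x) := by
    intro x
    rw [hQ2_def]; simp only [if_neg (by omega : ¬ u + x < u)]
    congr 1; omega
  have hQ2walk : IsWalk A (u + (t - m)) Q2 := by
    intro x hx
    rcases lt_or_ge x u with h | h
    · have e1 : Q2 x = cp (s' + x) := hQ2cp x (le_of_lt h)
      have e2 : Q2 (x + 1) = cp (s' + x + 1) := by
        rw [hQ2cp (x + 1) (by omega)]; congr 1
      rw [e1, e2, harcs (s' + x) (by omega)]
      exact (by norm_num : (0 : Rmax) ≠ ⊥)
    · have e1 : Q2 x = P (m + (x - u)) := by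
        have := hQ2P (x - u); rwa [Nat.add_sub_cancel' h] at this
      have e2 : Q2 (x + 1) = P (m + (x - u) + 1) := by
        have := hQ2P (x - u + 1)
        rw [show u + (x - u + 1) = x + 1 by omega] at this
        rw [this]; congr 1
      rw [e1, e2]
      exact hP (m + (x - u)) (by omega)
  have hQ20 : Q2 0 = cp s' := by
    rw [hQ2cp 0 (Nat.zero_le u), Nat.add_zero]
  have hQ2end : Q2 (u + (t - m)) = j := by
    rw [hQ2P (t - m), Nat.add_sub_cancel' hmlt, hPt]
  have hdvd2 : ℓ ∣ (u + (t - m)) := Nat.dvd_of_mod_eq_zero hT2mod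
  have hwQ2 : weight A (u + (t - m)) Q2
      = ∑ x ∈ Finset.range (t - m), A (P (m + x)) (P (m + x + 1)) := by
    unfold weight
    rw [Finset.sum_range_add]
    have h1 : ∀ x ∈ Finset.range u, A (Q2 x) (Q2 (x + 1)) = 0 := by
      intro x hx
      rw [Finset.mem_range] at hx
      have e1 : Q2 x = cp (s' + x) := hQ2cp x (le_of_lt hx)
      have e2 : Q2 (x + 1) = cp (s' + x + 1) := by
        rw [hQ2cp (x + 1) (by omega)]; congr 1
      rw [e1, e2]; exact harcs (s' + x) (by omega)
    have h2 : ∀ x ∈ Finset.range (t - m),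
        A (Q2 (u + x)) (Q2 (u + x + 1)) = A (P (m + x)) (P (m + x + 1)) := by
      intro x hx
      have e1 : Q2 (u + x) = P (m + x) := hQ2P x
      have e2 : Q2 (u + x + 1) = P (m + x + 1) := by
        have := hQ2P (x + 1)
        rw [show u + (x + 1) = u + x + 1 by omega] at this
        rw [this]; congr 1
      rw [e1, e2]
    rw [Finset.sum_congr rfl h1, Finset.sum_congr rfl h2]
    simp
  have hb2 : (∑ x ∈ Finset.range (t - m), A (P (m + x)) (P (m + x + 1))) ≤ d (cp s') j := by
    rw [← hwQ2]
    exact (hd (cp s') j).1 (u + (t - m)) Q2 hQ2walk hQ20 hQ2end hdvd2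
  -- split the weight of P
  have hwP : weight A t P = (∑ x ∈ Finset.range m, A (P x) (P (x + 1)))
      + ∑ x ∈ Finset.range (t - m), A (P (m + x)) (P (m + x + 1)) := by
    unfold weight
    rw [show t = m + (t - m) by omega, Finset.sum_range_add, Nat.add_sub_cancel_left]
  refine ⟨⟨s, hs⟩, ⟨s', hs'⟩, hcong, ?_⟩
  rw [hwP]
  exact add_le_add hb1 hb2
end

section
/- Let A ∈ ℝ_max^{n×n} be a visualized matrix with λ(A) = 0, and let 𝒞* = (1, 2, …, ℓ, 1) be a critical circuit on the nodes {1,…,ℓ}. For nodes i, j let d_{ij} be the maximum weight over all i-j paths in 𝒢(A) whose length is a nonnegative multiple of ℓ (ε if none). Define C ∈ ℝ_max^{n×ℓ} by [C]_{ik} = d_{ik}, R ∈ ℝ_max^{ℓ×n} by [R]_{kj} = d_{kj}, and S ∈ {0,ε}^{ℓ×ℓ} by [S]_{kk′} = 0 if (k,k′) is an arc of 𝒞* and [S]_{kk′} = ε otherwise. Let W^t ∈ ℝ_max^{n×n} have (i,j) entry equal to the maximum weight over i-j paths in 𝒢(A) of length t that contain 𝒞* as a consecutive subpath (ε if none). Then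 S is periodic with S^{⊗ℓ} = I_ℓ, and W^t = C ⊗ S^{⊗t} ⊗ R for all t ≥ 2n². -/
open BigOperators

namespace MaxPlus

variable {n : ℕ}

lemma weight_zero (A : Matrix (Fin n) (Fin n) Rmax) (P : ℕ → Fin n) : weight A 0 P = 0 := by
  simp [weight]

lemma weight_congr {A : Matrix (Fin n) (Fin n) Rmax} {t : ℕ} {P Q : ℕ → Fin n}
    (h : ∀ k, k ≤ t → P k = Q k) : weight A t P = weight A t Q := by
  unfold weight
  refine Finset.sum_congr rfl fun k hk => ?_
  rw [Finset.mem_range] at hk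
  rw [h k hk.le, h (k+1) hk]

/-- Concatenation of walks. -/
def cat (s : ℕ) (P Q : ℕ → Fin n) : ℕ → Fin n := fun m => if m < s then P m else Q (m - s)

lemma cat_left {s : ℕ} {P Q : ℕ → Fin n} (hPQ : P s = Q 0) {m : ℕ} (h : m ≤ s) :
    cat s P Q m = P m := by
  unfold cat
  rcases lt_or_eq_of_le h with h' | rfl
  · rw [if_pos h']
  · rw [if_neg (lt_irrefl m), Nat.sub_self, ← hPQ]

lemma cat_right {s : ℕ} {P Q : ℕ → Fin n} {m : ℕ} (h : s ≤ m) :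
    cat s P Q m = Q (m - s) := by
  unfold cat; rw [if_neg (by omega)]

lemma isWalk_cat {A : Matrix (Fin n) (Fin n) Rmax} {s r : ℕ} {P Q : ℕ → Fin n}
    (hP : IsWalk A s P) (hQ : IsWalk A r Q) (hPQ : P s = Q 0) :
    IsWalk A (s + r) (cat s P Q) := by
  intro k hk
  rcases lt_or_ge k s with h | h
  · rw [cat_left hPQ h.le, cat_left hPQ (by omega)]
    exact hP k h
  · rw [cat_right h, cat_right (by omega : s ≤ k + 1),
      (by omega : k + 1 - s = (k - s) + 1)]
    exact hQ (k - s) (by omega)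

lemma weight_cat {A : Matrix (Fin n) (Fin n) Rmax} {s r : ℕ} {P Q : ℕ → Fin n}
    (hPQ : P s = Q 0) :
    weight A (s + r) (cat s P Q) = weight A s P + weight A r Q := by
  induction r with
  | zero =>
    rw [Nat.add_zero, weight_zero, add_zero]
    exact (weight_congr fun k hk => (cat_left hPQ hk).symm).symm
  | succ r ih =>
    have h1 : weight A (s + (r + 1)) (cat s P Q) =
        weight A (s + r) (cat s P Q) + A (cat s P Q (s + r)) (cat s P Q (s + r + 1)) := by
      rw [← Nat.add_assoc]; exact Finset.sum_range_succ _ _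
    have h2 : weight A (r + 1) Q = weight A r Q + A (Q r) (Q (r + 1)) :=
      Finset.sum_range_succ _ _
    rw [h1, ih, h2, cat_right (by omega : s ≤ s + r), cat_right (by omega : s ≤ s + r + 1),
      (by omega : s + r - s = r), (by omega : s + r + 1 - s = r + 1), add_assoc]

lemma weight_split (A : Matrix (Fin n) (Fin n) Rmax) (s r : ℕ) (P : ℕ → Fin n) :
    weight A (s + r) P = weight A s P + weight A r (fun m => P (s + m)) := by
  have hPQ : P s = (fun m => P (s + m)) 0 := by simp
  rw [← weight_cat hPQ]
  refine weight_congr fun k hk => ?_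
  rcases lt_or_ge k s with h | h
  · rw [cat_left hPQ h.le]
  · rw [cat_right h]; show P k = P (s + (k - s)); congr 1; omega

lemma isWalk_prefix {A : Matrix (Fin n) (Fin n) Rmax} {s r : ℕ} {P : ℕ → Fin n}
    (h : IsWalk A (s + r) P) : IsWalk A s P :=
  fun k hk => h k (by omega)

lemma isWalk_suffix {A : Matrix (Fin n) (Fin n) Rmax} {s r : ℕ} {P : ℕ → Fin n}
    (h : IsWalk A (s + r) P) : IsWalk A r (fun m => P (s + m)) := by
  intro k hk
  have := h (s + k) (by omega)
  simpa [Nat.add_assoc] using this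

lemma weight_ne_bot {A : Matrix (Fin n) (Fin n) Rmax} {t : ℕ} {P : ℕ → Fin n}
    (h : IsWalk A t P) : weight A t P ≠ ⊥ := by
  induction t with
  | zero => simp [weight]
  | succ t ih =>
    rw [weight, Finset.sum_range_succ]
    have h1 : weight A t P ≠ ⊥ := ih (fun k hk => h k (by omega))
    have h2 : A (P t) (P (t + 1)) ≠ ⊥ := h t (by omega)
    exact WithBot.add_ne_bot.mpr ⟨h1, h2⟩

lemma weight_nonpos {A : Matrix (Fin n) (Fin n) Rmax} (hvis : ∀ i j, A i j ≤ (0 : Rmax))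
    (t : ℕ) (P : ℕ → Fin n) : weight A t P ≤ 0 :=
  Finset.sum_nonpos fun k _ => hvis _ _

lemma circuit_weight_nonpos {A : Matrix (Fin n) (Fin n) Rmax} (hlam : IsMaxCircuitMean A 0)
    {c : ℕ} {q : ℕ → Fin n} (hc : 0 < c) (hw : IsWalk A c q) (hq : q c = q 0) :
    weight A c q ≤ 0 := by
  have hmean := hlam.2 c q ⟨hc, hw, hq⟩
  obtain ⟨w, hwq⟩ := WithBot.ne_bot_iff_exists.mp (weight_ne_bot hw)
  rw [mean, ← hwq] at hmean
  simp only [WithBot.unbotD_coe] at hmean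
  have hwle : w ≤ 0 := by
    by_contra hpos
    push_neg at hpos
    have hc' : (0 : ℝ) < c := by exact_mod_cast hc
    have : 0 < w / c := div_pos hpos hc'
    linarith
  rw [← hwq]
  exact_mod_cast hwle

end MaxPlus
namespace MaxPlus

variable {n : ℕ}

lemma excise' {A : Matrix (Fin n) (Fin n) Rmax} (hlam : IsMaxCircuitMean A 0)
    {a c r : ℕ} {P : ℕ → Fin n} (hP : IsWalk A (a + c + r) P) (heq : P a = P (a + c)) :
    ∃ P', IsWalk A (a + r) P' ∧ P' 0 = P 0 ∧ P' (a + r) = P (a + c + r) ∧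
      weight A (a + c + r) P ≤ weight A (a + r) P' := by
  set Q : ℕ → Fin n := fun m => P (a + c + m) with hQdef
  have hjunc : P a = Q 0 := by simpa [hQdef] using heq
  have hP' : IsWalk A (a + (c + r)) P := by rwa [← Nat.add_assoc]
  have hPw : IsWalk A a P := isWalk_prefix hP'
  have hQw : IsWalk A r Q := by
    have := isWalk_suffix (s := a + c) (r := r) hP
    simpa [hQdef] using this
  have hmidw : IsWalk A c (fun m => P (a + m)) := isWalk_prefix (isWalk_suffix hP')
  have hmid_nonpos : weight A c (fun m => P (a + m)) ≤ 0 := by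
    rcases Nat.eq_zero_or_pos c with rfl | hc
    · rw [weight_zero]
    · exact circuit_weight_nonpos hlam hc hmidw (by simpa using heq.symm)
  refine ⟨cat a P Q, isWalk_cat hPw hQw hjunc, cat_left hjunc (Nat.zero_le a), ?_, ?_⟩
  · rw [cat_right (by omega : a ≤ a + r), (by omega : a + r - a = r)]
  · have e1 : weight A (a + c + r) P
        = weight A a P + (weight A c (fun m => P (a + m)) + weight A r Q) := by
      rw [Nat.add_assoc, weight_split A a (c + r) P, weight_split A c r (fun m => P (a + m))]
      congr 1
      congr 1
      refine weight_congr fun k hk => ?_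
      show P (a + (c + k)) = P (a + c + k)
      rw [Nat.add_assoc]
    rw [e1, weight_cat hjunc]
    have h2 : weight A c (fun m => P (a + m)) + weight A r Q ≤ 0 + weight A r Q :=
      add_le_add_left hmid_nonpos _
    calc weight A a P + (weight A c (fun m => P (a + m)) + weight A r Q)
        ≤ weight A a P + (0 + weight A r Q) := add_le_add_right h2 _
      _ = weight A a P + weight A r Q := by rw [zero_add]

lemma shorten {A : Matrix (Fin n) (Fin n) Rmax} (hlam : IsMaxCircuitMean A 0)
    {ℓ : ℕ} (hℓ : 0 < ℓ) :
    ∀ T P, IsWalk A T P → ℓ ∣ T →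
    ∃ T' P', T' < n * ℓ ∧ ℓ ∣ T' ∧ IsWalk A T' P' ∧ P' 0 = P 0 ∧ P' T' = P T ∧
      weight A T P ≤ weight A T' P' := by
  intro T
  induction T using Nat.strong_induction_on with
  | _ T ih =>
    intro P hP hdvd
    rcases lt_or_ge T (n * ℓ) with hT | hT
    · exact ⟨T, P, hT, hdvd, hP, rfl, rfl, le_refl _⟩
    · have hcard : Fintype.card (Fin n) < Fintype.card (Fin (n + 1)) := by simp
      obtain ⟨x, y, hxy, hPxy⟩ := Fintype.exists_ne_map_eq_of_card_lt
        (fun a : Fin (n + 1) => P ((a : ℕ) * ℓ)) hcard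
      -- wlog x < y
      obtain ⟨a, b, hab, habn, hPab⟩ :
          ∃ a b : ℕ, a < b ∧ b ≤ n ∧ P (a * ℓ) = P (b * ℓ) := by
        rcases lt_or_ge (x : ℕ) (y : ℕ) with h | h
        · exact ⟨x, y, h, by omega, hPxy⟩
        · have h' : (y : ℕ) < (x : ℕ) := by
            rcases lt_or_eq_of_le h with h' | h'
            · exact h'
            · exact absurd (Fin.ext h'.symm) hxy
          exact ⟨y, x, h', by omega, hPxy.symm⟩
      have hble : b * ℓ ≤ T := le_trans (Nat.mul_le_mul_right ℓ habn) hT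
      have hc : 0 < (b - a) * ℓ := Nat.mul_pos (by omega) hℓ
      have hsum : a * ℓ + (b - a) * ℓ = b * ℓ := by
        rw [← Nat.add_mul]; congr 1; omega
      obtain ⟨r, hr⟩ : ∃ r, T = a * ℓ + (b - a) * ℓ + r := ⟨T - b * ℓ, by omega⟩
      have hP2 : IsWalk A (a * ℓ + (b - a) * ℓ + r) P := by rwa [← hr]
      have heq : P (a * ℓ) = P (a * ℓ + (b - a) * ℓ) := by rw [hsum]; exact hPab
      obtain ⟨P', hP'w, hP'0, hP'e, hwle⟩ := excise' hlam hP2 heq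
      have hlt : a * ℓ + r < T := by omega
      have hdvd' : ℓ ∣ a * ℓ + r := by
        have h1 : ℓ ∣ a * ℓ := dvd_mul_left ℓ a
        have h2 : ℓ ∣ (b - a) * ℓ := dvd_mul_left ℓ (b - a)
        have h3 : ℓ ∣ a * ℓ + (b - a) * ℓ + r := by rwa [← hr]
        have h4 : ℓ ∣ (b - a) * ℓ + (a * ℓ + r) := by
          have : a * ℓ + (b - a) * ℓ + r = (b - a) * ℓ + (a * ℓ + r) := by omega
          rwa [this] at h3
        exact (Nat.dvd_add_right h2).mp h4
      obtain ⟨T'', P'', hT'', hdvd'', hw'', h0'', he'', hwle''⟩ :=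
        ih (a * ℓ + r) hlt P' hP'w hdvd'
      refine ⟨T'', P'', hT'', hdvd'', hw'', by rw [h0'', hP'0], ?_, ?_⟩
      · rw [he'', hP'e, ← hr]
      · calc weight A T P = weight A (a * ℓ + (b - a) * ℓ + r) P := by rw [← hr]
          _ ≤ weight A (a * ℓ + r) P' := hwle
          _ ≤ weight A T'' P'' := hwle''

section circ

variable {A : Matrix (Fin n) (Fin n) Rmax} {ℓ : ℕ} {cp : ℕ → Fin n}

lemma arc_mod (hℓ : 0 < ℓ) (hcl : cp ℓ = cp 0)
    (harcs : ∀ m, m < ℓ → A (cp m) (cp (m + 1)) = 0) (r : ℕ) :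
    A (cp (r % ℓ)) (cp ((r + 1) % ℓ)) = 0 := by
  have h1 : r % ℓ < ℓ := Nat.mod_lt _ hℓ
  have e : (r + 1) % ℓ = (r % ℓ + 1) % ℓ := (Nat.mod_add_mod r ℓ 1).symm
  rcases lt_or_ge (r % ℓ + 1) ℓ with h | h
  · rw [e, Nat.mod_eq_of_lt h]
    exact harcs _ h1
  · have h2 : r % ℓ + 1 = ℓ := by omega
    rw [e, h2, Nat.mod_self, ← hcl]
    have := harcs _ h1
    rwa [h2] at this

lemma isWalk_mod (hℓ : 0 < ℓ) (hcl : cp ℓ = cp 0)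
    (harcs : ∀ m, m < ℓ → A (cp m) (cp (m + 1)) = 0) (k M : ℕ) :
    IsWalk A M (fun s => cp ((k + s) % ℓ)) := by
  intro s _
  show A (cp ((k + s) % ℓ)) (cp ((k + (s + 1)) % ℓ)) ≠ ⊥
  rw [(by omega : k + (s + 1) = (k + s) + 1), arc_mod hℓ hcl harcs (k + s)]
  simp

lemma weight_mod (hℓ : 0 < ℓ) (hcl : cp ℓ = cp 0)
    (harcs : ∀ m, m < ℓ → A (cp m) (cp (m + 1)) = 0) (k M : ℕ) :
    weight A M (fun s => cp ((k + s) % ℓ)) = 0 := by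
  refine Finset.sum_eq_zero fun s _ => ?_
  show A (cp ((k + s) % ℓ)) (cp ((k + (s + 1)) % ℓ)) = 0
  rw [(by omega : k + (s + 1) = (k + s) + 1)]
  exact arc_mod hℓ hcl harcs (k + s)

end circ

lemma pow_shift {ℓ : ℕ} (hℓ : 0 < ℓ) (S : Matrix (Fin ℓ) (Fin ℓ) Rmax)
    (hS : ∀ k k' : Fin ℓ, S k k' = if ((k : ℕ) + 1) % ℓ = (k' : ℕ) then (0 : Rmax) else ⊥) :
    ∀ t (k k' : Fin ℓ), pow S t k k' = if ((k : ℕ) + t) % ℓ = (k' : ℕ) then (0 : Rmax) else ⊥ := by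
  intro t
  induction t with
  | zero =>
    intro k k'
    show one ℓ k k' = _
    unfold one
    by_cases h : k = k'
    · rw [if_pos h, if_pos (by rw [Nat.add_zero, Nat.mod_eq_of_lt k.isLt, h])]
    · rw [if_neg h, if_neg fun hc => h (Fin.ext (by rwa [Nat.add_zero, Nat.mod_eq_of_lt k.isLt] at hc))]
  | succ t ih =>
    intro k k'
    show mul (pow S t) S k k' = _
    unfold mul
    apply le_antisymm
    · apply Finset.sup_le
      intro c _
      rw [ih k c, hS c k']
      by_cases h1 : ((k : ℕ) + t) % ℓ = (c : ℕ)
      · by_cases h2 : ((c : ℕ) + 1) % ℓ = (k' : ℕ)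
        · have h3 : ((k : ℕ) + (t + 1)) % ℓ = (k' : ℕ) := by
            rw [← h2, ← h1, Nat.mod_add_mod, ← Nat.add_assoc]
          simp [h1, h2, h3]
        · rw [if_pos h1, if_neg h2, WithBot.add_bot]
          exact bot_le
      · rw [if_neg h1, WithBot.bot_add]
        exact bot_le
    · by_cases h : ((k : ℕ) + (t + 1)) % ℓ = (k' : ℕ)
      · rw [if_pos h]
        set c : Fin ℓ := ⟨((k : ℕ) + t) % ℓ, Nat.mod_lt _ hℓ⟩ with hc
        refine le_trans ?_ (Finset.le_sup (Finset.mem_univ c))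
        rw [ih k c, hS c k']
        have h1 : ((k : ℕ) + t) % ℓ = (c : ℕ) := rfl
        have h2 : ((c : ℕ) + 1) % ℓ = (k' : ℕ) := by
          show (((k : ℕ) + t) % ℓ + 1) % ℓ = (k' : ℕ)
          rw [Nat.mod_add_mod, ← h, ← Nat.add_assoc]
        rw [if_pos h1, if_pos h2]
        simp
      · rw [if_neg h]
        exact bot_le

end MaxPlus

open MaxPlus in
/-- **Proposition 4.** Let `A` be visualized with `λ(A) = 0` and let
`𝒞* = (cp 0, …, cp ℓ)` be a critical (elementary) circuit with all arcs of weight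
`0`.  With `d i j` the maximum weight over `i`-`j` paths of length a nonnegative
multiple of `ℓ`, set `[C]_{ik} = d i (cp k)`, `[R]_{kj} = d (cp k) j`, and let `S`
be the `(0,ε)` permutation matrix of the circuit `𝒞*`.  Let `W^t` have `(i,j)` entry
the maximum weight over `i`-`j` paths of length `t` containing `𝒞*` as a consecutive
subpath.  Then `S^{⊗ℓ} = I_ℓ` and `W^t = C ⊗ S^{⊗t} ⊗ R` for all `t ≥ 2n²`. -/
theorem csr_term_decomposition {n : ℕ}
    (A : Matrix (Fin n) (Fin n) Rmax)
    (hvis : ∀ i j, A i j ≤ (0 : Rmax)) (hlam : IsMaxCircuitMean A 0)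
    (ℓ : ℕ) (cp : ℕ → Fin n) (hcirc : IsElemCircuit A ℓ cp)
    (hcrit : mean A ℓ cp = 0) (harcs : ∀ m, m < ℓ → A (cp m) (cp (m + 1)) = 0)
    (d : Fin n → Fin n → Rmax)
    (hd : ∀ i j : Fin n,
      (∀ T P, IsWalk A T P → P 0 = i → P T = j → ℓ ∣ T → weight A T P ≤ d i j) ∧
      (d i j = ⊥ ∨ ∃ T P, IsWalk A T P ∧ P 0 = i ∧ P T = j ∧ ℓ ∣ T ∧
        weight A T P = d i j))
    (C : Matrix (Fin n) (Fin ℓ) Rmax) (hC : ∀ i k, C i k = d i (cp k))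
    (R : Matrix (Fin ℓ) (Fin n) Rmax) (hR : ∀ k j, R k j = d (cp k) j)
    (S : Matrix (Fin ℓ) (Fin ℓ) Rmax)
    (hS : ∀ k k' : Fin ℓ, S k k' = if ((k : ℕ) + 1) % ℓ = (k' : ℕ) then (0 : Rmax) else ⊥)
    (W : ℕ → Matrix (Fin n) (Fin n) Rmax)
    (hW : ∀ (t : ℕ) (i j : Fin n),
      (∀ P, IsWalk A t P → P 0 = i → P t = j → ContainsCircuit t P ℓ cp →
        weight A t P ≤ W t i j) ∧
      (W t i j = ⊥ ∨ ∃ P, IsWalk A t P ∧ P 0 = i ∧ P t = j ∧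
        ContainsCircuit t P ℓ cp ∧ weight A t P = W t i j)) :
    pow S ℓ = one ℓ ∧ ∀ t, 2 * n ^ 2 ≤ t → W t = mul (mul C (pow S t)) R := by
  have hℓ : 0 < ℓ := hcirc.1.1
  have hcl : cp ℓ = cp 0 := hcirc.1.2.2
  have hln : ℓ ≤ n := by
    have hinj : Function.Injective (fun x : Fin ℓ => cp (x : ℕ)) := fun x y hxy =>
      Fin.ext (hcirc.2 x x.isLt y y.isLt hxy)
    simpa using Fintype.card_le_of_injective _ hinj
  have hne : Nonempty (Fin ℓ) := ⟨⟨0, hℓ⟩⟩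
  have hpow := pow_shift hℓ S hS
  constructor
  · funext k k'
    rw [hpow ℓ k k']
    show _ = one ℓ k k'
    unfold one
    by_cases h : k = k'
    · rw [if_pos (by rw [Nat.add_mod_right, Nat.mod_eq_of_lt k.isLt, h] : ((k:ℕ) + ℓ) % ℓ = (k':ℕ)), if_pos h]
    · rw [if_neg h, if_neg (fun hc => h (Fin.ext (by rwa [Nat.add_mod_right, Nat.mod_eq_of_lt k.isLt] at hc)))]
  · have hRHS : ∀ t (i j : Fin n), mul (mul C (pow S t)) R i j
        = Finset.univ.sup (fun k : Fin ℓ => d i (cp (k : ℕ)) + d (cp (((k : ℕ) + t) % ℓ)) j) := by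
      intro t i j
      apply le_antisymm
      · apply Finset.sup_le
        intro c _
        obtain ⟨k, -, hk⟩ := Finset.exists_mem_eq_sup (Finset.univ : Finset (Fin ℓ))
          Finset.univ_nonempty (fun k : Fin ℓ => C i k + pow S t k c)
        show mul C (pow S t) i c + R c j ≤ _
        rw [show mul C (pow S t) i c = C i k + pow S t k c from hk, hpow t k c]
        by_cases h : ((k : ℕ) + t) % ℓ = (c : ℕ)
        · rw [if_pos h, add_zero]
          have he : C i k + R c j = d i (cp (k : ℕ)) + d (cp (((k : ℕ) + t) % ℓ)) j := by
            rw [hC, hR, ← h]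
          rw [he]
          exact Finset.le_sup
            (f := fun k : Fin ℓ => d i (cp (k : ℕ)) + d (cp (((k : ℕ) + t) % ℓ)) j)
            (Finset.mem_univ k)
        · rw [if_neg h, WithBot.add_bot, WithBot.bot_add]
          exact bot_le
      · apply Finset.sup_le
        intro k _
        have hclt : ((k : ℕ) + t) % ℓ < ℓ := Nat.mod_lt _ hℓ
        have h1 : C i k + pow S t k ⟨((k : ℕ) + t) % ℓ, hclt⟩
            ≤ mul C (pow S t) i ⟨((k : ℕ) + t) % ℓ, hclt⟩ :=
          Finset.le_sup (f := fun s : Fin ℓ => C i s + pow S t s ⟨((k : ℕ) + t) % ℓ, hclt⟩)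
            (Finset.mem_univ k)
        have h2 : mul C (pow S t) i ⟨((k : ℕ) + t) % ℓ, hclt⟩
              + R ⟨((k : ℕ) + t) % ℓ, hclt⟩ j
            ≤ mul (mul C (pow S t)) R i j :=
          Finset.le_sup (f := fun s : Fin ℓ => mul C (pow S t) i s + R s j)
            (Finset.mem_univ (⟨((k : ℕ) + t) % ℓ, hclt⟩ : Fin ℓ))
        refine le_trans ?_ (le_trans (add_le_add_left h1 _) h2)
        have he : C i k + pow S t k ⟨((k : ℕ) + t) % ℓ, hclt⟩ = d i (cp (k : ℕ)) := by
          rw [hpow t k ⟨((k : ℕ) + t) % ℓ, hclt⟩, if_pos rfl, add_zero, hC]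
        rw [he, hR]
    intro t ht
    funext i j
    rw [hRHS t i j]
    apply le_antisymm
    · -- W t i j ≤ sup
      rcases (hW t i j).2 with hbot | ⟨P, hPw, hP0, hPt, ⟨m, hmt, hsub⟩, hPW⟩
      · rw [hbot]; exact bot_le
      rw [← hPW]
      obtain ⟨r, rfl⟩ : ∃ r, t = m + (ℓ + r) := ⟨t - m - ℓ, by omega⟩
      have hwsplit : weight A (m + (ℓ + r)) P
          = weight A m P + (weight A ℓ (fun s => P (m + s))
            + weight A r (fun s => P (m + (ℓ + s)))) := by
        rw [weight_split A m (ℓ + r) P]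
        congr 1
        rw [weight_split A ℓ r (fun s => P (m + s))]
      have hmid : weight A ℓ (fun s => P (m + s)) = 0 := by
        have he : weight A ℓ (fun s => P (m + s)) = weight A ℓ cp :=
          weight_congr fun s hs => hsub s hs
        rw [he]
        exact Finset.sum_eq_zero fun s hs => harcs s (Finset.mem_range.mp hs)
      obtain ⟨u, hudef⟩ : ∃ u, u = (ℓ - m % ℓ) % ℓ := ⟨_, rfl⟩
      have hu : u < ℓ := by rw [hudef]; exact Nat.mod_lt _ hℓ
      have hj1 : P m = (fun s => cp s) 0 := by simpa using hsub 0 (Nat.zero_le ℓ)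
      have hW1w : IsWalk A (m + u) (cat m P (fun s => cp s)) := by
        refine isWalk_cat (isWalk_prefix (s := m) (r := ℓ + r) hPw) ?_ hj1
        intro s hs
        show A (cp s) (cp (s + 1)) ≠ ⊥
        rw [harcs s (by omega)]
        simp
      have hW1T : cat m P (fun s => cp s) (m + u) = cp u := by
        rw [cat_right (by omega : m ≤ m + u)]
        show cp (m + u - m) = cp u
        congr 1
        omega
      have hW10 : cat m P (fun s => cp s) 0 = i := by
        rw [cat_left hj1 (Nat.zero_le m)]; exact hP0
      have hdvd1 : ℓ ∣ m + u := by
        apply Nat.dvd_of_mod_eq_zero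
        rw [hudef, Nat.add_mod_mod, ← Nat.mod_add_mod,
          Nat.add_sub_cancel' (Nat.mod_lt m hℓ).le, Nat.mod_self]
      have hwW1 : weight A (m + u) (cat m P (fun s => cp s)) = weight A m P := by
        rw [weight_cat hj1]
        have hz : weight A u (fun s => cp s) = 0 :=
          Finset.sum_eq_zero fun s hs => harcs s (by have := Finset.mem_range.mp hs; omega)
        rw [hz, add_zero]
      have hb1 : weight A m P ≤ d i (cp u) := by
        rw [← hwW1]
        exact (hd i (cp u)).1 (m + u) _ hW1w hW10 hW1T hdvd1
      obtain ⟨kv, hkvdef⟩ : ∃ kv, kv = (u + (m + (ℓ + r))) % ℓ := ⟨_, rfl⟩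
      have hkvlt : kv < ℓ := by rw [hkvdef]; exact Nat.mod_lt _ hℓ
      have hkvr : kv = r % ℓ := by
        obtain ⟨q, hq⟩ := hdvd1
        rw [hkvdef, show u + (m + (ℓ + r)) = ℓ * (q + 1) + r from by
          rw [Nat.mul_succ, ← hq]; omega]
        exact Nat.mul_add_mod _ _ _
      have hj2 : (fun s => cp (kv + s)) (ℓ - kv) = (fun s => P (m + (ℓ + s))) 0 := by
        show cp (kv + (ℓ - kv)) = P (m + (ℓ + 0))
        rw [show kv + (ℓ - kv) = ℓ from by omega, show m + (ℓ + 0) = m + ℓ from by omega]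
        exact (hsub ℓ (le_refl ℓ)).symm
      have hcpw : IsWalk A (ℓ - kv) (fun s => cp (kv + s)) := by
        intro s hs
        show A (cp (kv + s)) (cp (kv + (s + 1))) ≠ ⊥
        rw [← Nat.add_assoc, harcs (kv + s) (by omega)]
        simp
      have hsufw : IsWalk A r (fun s => P (m + (ℓ + s))) := by
        intro s hs
        show A (P (m + (ℓ + s))) (P (m + (ℓ + (s + 1)))) ≠ ⊥
        rw [show m + (ℓ + (s + 1)) = (m + (ℓ + s)) + 1 from by omega]
        exact hPw (m + (ℓ + s)) (by omega)
      have hW2w : IsWalk A ((ℓ - kv) + r)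
          (cat (ℓ - kv) (fun s => cp (kv + s)) (fun s => P (m + (ℓ + s)))) :=
        isWalk_cat hcpw hsufw hj2
      have hW20 : cat (ℓ - kv) (fun s => cp (kv + s)) (fun s => P (m + (ℓ + s))) 0 = cp kv := by
        rw [cat_left (s := ℓ - kv) (P := fun s => cp (kv + s))
          (Q := fun s => P (m + (ℓ + s))) hj2 (Nat.zero_le _)]
        show cp (kv + 0) = cp kv
        rw [Nat.add_zero]
      have hW2T : cat (ℓ - kv) (fun s => cp (kv + s)) (fun s => P (m + (ℓ + s))) ((ℓ - kv) + r) = j := by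
        rw [cat_right (by omega : ℓ - kv ≤ ℓ - kv + r)]
        show P (m + (ℓ + (ℓ - kv + r - (ℓ - kv)))) = j
        rw [show ℓ - kv + r - (ℓ - kv) = r from by omega]
        exact hPt
      have hdvd2 : ℓ ∣ (ℓ - kv) + r := by
        have h1 : ℓ ∣ r - r % ℓ := (Nat.modEq_iff_dvd' (Nat.mod_le r ℓ)).mp (Nat.mod_modEq r ℓ)
        have hle : r % ℓ ≤ r := Nat.mod_le r ℓ
        have hlt2 : r % ℓ < ℓ := Nat.mod_lt _ hℓ
        have h2 : (ℓ - kv) + r = ℓ + (r - r % ℓ) := by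
          rw [hkvr]; omega
        rw [h2]
        exact Nat.dvd_add dvd_rfl h1
      have hwW2 : weight A ((ℓ - kv) + r)
          (cat (ℓ - kv) (fun s => cp (kv + s)) (fun s => P (m + (ℓ + s))))
          = weight A r (fun s => P (m + (ℓ + s))) := by
        rw [weight_cat (s := ℓ - kv) (P := fun s => cp (kv + s))
          (Q := fun s => P (m + (ℓ + s))) hj2]
        have hz : weight A (ℓ - kv) (fun s => cp (kv + s)) = 0 := by
          refine Finset.sum_eq_zero fun s hs => ?_
          have hs' := Finset.mem_range.mp hs
          show A (cp (kv + s)) (cp (kv + (s + 1))) = 0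
          rw [← Nat.add_assoc]
          exact harcs (kv + s) (by omega)
        rw [hz, zero_add]
      have hb2 : weight A r (fun s => P (m + (ℓ + s))) ≤ d (cp kv) j := by
        rw [← hwW2]
        exact (hd (cp kv) j).1 _ _ hW2w hW20 hW2T hdvd2
      rw [hwsplit, hmid, zero_add]
      refine le_trans (add_le_add hb1 hb2) ?_
      have hfin := Finset.le_sup (f := fun k : Fin ℓ =>
        d i (cp (k : ℕ)) + d (cp (((k : ℕ) + (m + (ℓ + r))) % ℓ)) j)
        (Finset.mem_univ (⟨u, hu⟩ : Fin ℓ))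
      have he : d i (cp u) + d (cp kv) j
          = d i (cp ((⟨u, hu⟩ : Fin ℓ) : ℕ))
            + d (cp ((((⟨u, hu⟩ : Fin ℓ) : ℕ) + (m + (ℓ + r))) % ℓ)) j := by
        rw [hkvdef]
      rw [he]
      exact hfin
    · -- sup ≤ W t i j
      apply Finset.sup_le
      intro k _
      rcases (hd i (cp (k : ℕ))).2 with h1 | ⟨T1, P1, hP1w, hP10, hP1T, hdv1, hw1⟩
      · rw [h1, WithBot.bot_add]; exact bot_le
      rcases (hd (cp (((k : ℕ) + t) % ℓ)) j).2 with h2 | ⟨T2, P2, hP2w, hP20, hP2T, hdv2, hw2⟩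
      · rw [h2, WithBot.add_bot]; exact bot_le
      obtain ⟨T1', P1', hT1lt, hdv1', hP1'w, hP1'0, hP1'T, hle1⟩ :=
        shorten hlam hℓ T1 P1 hP1w hdv1
      obtain ⟨T2', P2', hT2lt, hdv2', hP2'w, hP2'0, hP2'T, hle2⟩ :=
        shorten hlam hℓ T2 P2 hP2w hdv2
      have hbound : ∀ {T' : ℕ}, T' < n * ℓ → ℓ ∣ T' → T' + ℓ ≤ n * ℓ := by
        intro T' hlt hdv
        obtain ⟨q, rfl⟩ := hdv
        have hq : q < n := by
          rcases lt_or_ge q n with h | h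
          · exact h
          · have hlt' : ℓ * q < ℓ * n := by rw [mul_comm ℓ n]; exact hlt
            exact absurd (Nat.mul_le_mul (le_refl ℓ) h) (not_le.mpr hlt')
        calc ℓ * q + ℓ = ℓ * (q + 1) := by ring
          _ ≤ ℓ * n := Nat.mul_le_mul (le_refl ℓ) hq
          _ = n * ℓ := mul_comm ℓ n
      have hb1 := hbound hT1lt hdv1'
      have hb2 := hbound hT2lt hdv2'
      have hnl : n * ℓ ≤ n ^ 2 := by
        calc n * ℓ ≤ n * n := Nat.mul_le_mul (le_refl n) hln
          _ = n ^ 2 := (pow_two n).symm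
      obtain ⟨a, ha⟩ : ∃ a, a = n * ℓ := ⟨_, rfl⟩
      obtain ⟨b, hbb⟩ : ∃ b, b = n ^ 2 := ⟨_, rfl⟩
      rw [← ha] at hb1 hb2
      rw [← ha, ← hbb] at hnl
      rw [← hbb] at ht
      have hℓn : ℓ ≤ a := by
        have : 1 * ℓ ≤ n * ℓ := Nat.mul_le_mul (by omega) (le_refl ℓ)
        omega
      obtain ⟨M, hMdef⟩ : ∃ M, M = t - T1' - T2' := ⟨_, rfl⟩
      have htM : T1' + (M + T2') = t := by omega
      have hM : 2 * ℓ ≤ M := by omega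
      obtain ⟨kv, hkvdef⟩ : ∃ kv, kv = ((k : ℕ) + t) % ℓ := ⟨_, rfl⟩
      have hkvlt : kv < ℓ := by rw [hkvdef]; exact Nat.mod_lt _ hℓ
      have hkM : ((k : ℕ) + M) % ℓ = kv := by
        obtain ⟨q1, hq1⟩ := hdv1'
        obtain ⟨q2, hq2⟩ := hdv2'
        rw [hkvdef, show (k : ℕ) + t = ((k : ℕ) + M) + ℓ * (q1 + q2) from by
          rw [Nat.mul_add, ← hq1, ← hq2]; omega]
        exact (Nat.add_mul_mod_self_left _ _ _).symm
      have hQw : IsWalk A M (fun s => cp (((k : ℕ) + s) % ℓ)) :=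
        isWalk_mod hℓ hcl harcs (k : ℕ) M
      have hQ0 : (fun s => cp (((k : ℕ) + s) % ℓ)) 0 = cp (k : ℕ) := by
        show cp (((k : ℕ) + 0) % ℓ) = cp (k : ℕ)
        rw [Nat.add_zero, Nat.mod_eq_of_lt k.isLt]
      have hQM : (fun s => cp (((k : ℕ) + s) % ℓ)) M = cp kv := by
        show cp (((k : ℕ) + M) % ℓ) = cp kv
        rw [hkM]
      have hj2 : (fun s => cp (((k : ℕ) + s) % ℓ)) M = P2' 0 := by
        rw [hQM, hP2'0, hP20, hkvdef]
      have hj1 : P1' T1' = (fun s => cp (((k : ℕ) + s) % ℓ)) 0 := by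
        rw [hP1'T, hP1T, hQ0]
      have hj1' : P1' T1' = cat M (fun s => cp (((k : ℕ) + s) % ℓ)) P2' 0 := by
        rw [cat_left (s := M) (P := fun s => cp (((k : ℕ) + s) % ℓ)) (Q := P2')
          hj2 (Nat.zero_le M)]
        exact hj1
      have hfw : IsWalk A t (cat T1' P1' (cat M (fun s => cp (((k : ℕ) + s) % ℓ)) P2')) := by
        rw [← htM]
        exact isWalk_cat hP1'w (isWalk_cat hQw hP2'w hj2) hj1'
      have hf0 : cat T1' P1' (cat M (fun s => cp (((k : ℕ) + s) % ℓ)) P2') 0 = i := by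
        rw [cat_left (s := T1') (P := P1')
          (Q := cat M (fun s => cp (((k : ℕ) + s) % ℓ)) P2') hj1' (Nat.zero_le _), hP1'0, hP10]
      have hft : cat T1' P1' (cat M (fun s => cp (((k : ℕ) + s) % ℓ)) P2') t = j := by
        rw [← htM, cat_right (by omega : T1' ≤ T1' + (M + T2')),
          show T1' + (M + T2') - T1' = M + T2' from by omega,
          cat_right (by omega : M ≤ M + T2'),
          show M + T2' - M = T2' from by omega, hP2'T, hP2T]
      obtain ⟨s0, hs0lt, hks0⟩ : ∃ s0, s0 < ℓ ∧ ((k : ℕ) + s0) % ℓ = 0 := by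
        rcases Nat.eq_zero_or_pos (k : ℕ) with hk0 | hk0
        · exact ⟨0, hℓ, by rw [hk0]; simp⟩
        · refine ⟨ℓ - (k : ℕ), by have := k.isLt; omega, ?_⟩
          rw [show (k : ℕ) + (ℓ - (k : ℕ)) = ℓ from by have := k.isLt; omega]
          exact Nat.mod_self ℓ
      have hcc : ContainsCircuit t (cat T1' P1' (cat M (fun s => cp (((k : ℕ) + s) % ℓ)) P2')) ℓ cp := by
        refine ⟨T1' + s0, by omega, ?_⟩
        intro j' hj'
        have e1 : cat T1' P1' (cat M (fun s => cp (((k : ℕ) + s) % ℓ)) P2') (T1' + s0 + j')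
            = cat M (fun s => cp (((k : ℕ) + s) % ℓ)) P2' (s0 + j') := by
          rw [cat_right (by omega : T1' ≤ T1' + s0 + j'),
            show T1' + s0 + j' - T1' = s0 + j' from by omega]
        have e2 : cat M (fun s => cp (((k : ℕ) + s) % ℓ)) P2' (s0 + j')
            = cp (((k : ℕ) + (s0 + j')) % ℓ) := by
          rw [cat_left (s := M) (P := fun s => cp (((k : ℕ) + s) % ℓ)) (Q := P2')
            hj2 (by omega : s0 + j' ≤ M)]
        rw [e1, e2,
          show (k : ℕ) + (s0 + j') = ((k : ℕ) + s0) + j' from by omega,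
          Nat.add_mod, hks0, Nat.zero_add, Nat.mod_mod_of_dvd j' dvd_rfl]
        rcases lt_or_eq_of_le hj' with h | h
        · rw [Nat.mod_eq_of_lt h]
        · rw [h, Nat.mod_self]
          exact hcl.symm
      have hwfull : weight A t (cat T1' P1' (cat M (fun s => cp (((k : ℕ) + s) % ℓ)) P2'))
          = weight A T1' P1' + weight A T2' P2' := by
        rw [← htM, weight_cat hj1',
          weight_cat (s := M) (P := fun s => cp (((k : ℕ) + s) % ℓ)) (Q := P2') hj2,
          weight_mod hℓ hcl harcs (k : ℕ) M, zero_add]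
      have hfle := (hW t i j).1 _ hfw hf0 hft hcc
      calc d i (cp (k : ℕ)) + d (cp (((k : ℕ) + t) % ℓ)) j
          = weight A T1 P1 + weight A T2 P2 := by rw [hw1, hw2]
        _ ≤ weight A T1' P1' + weight A T2' P2' := add_le_add hle1 hle2
        _ = weight A t (cat T1' P1' (cat M (fun s => cp (((k : ℕ) + s) % ℓ)) P2')) := hwfull.symm
        _ ≤ W t i j := hfle
end
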